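/- Let 𝓧 ⊆ L¹ contain all simple random variables and let ρ: 𝓧 → (−∞, ∞] be dilatation monotone with the Fatou property. Define ρ̄(X) = sup_{π ∈ Π} ρ(E[X|π]) for X ∈ L¹. Then ρ̄ agrees with ρ on 𝓧, takes values in (−∞, ∞], is dilatation monotone, and is ‖·‖₁ lower semicontinuous on L¹. -/

import Mathlib

/-!
By dilatation monotonicity, `ρ̄ ≤ ρ` on `𝓧`, and `ρ̄ (E[X|π]) ≤ ρ (E[X|π]) ≤ ρ̄ X` because
`E[X|π]` is simple. For `ρ ≤ ρ̄` on `𝓧` we apply the Fatou property to a sequence `E[X|πₙ]`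
converging to `X` a.s. and dominated by `|X| + b`. The partition `πₙ` consists of the cells
`{k w ≤ X < (k + 1) w}` of positive measure inside `{|X| < T}`, on which `E[X|πₙ]` is within `w`
of `X`, and one remainder cell. The remainder is tamed by letting it contain a cell `A₀` of
positive measure on which `|X|` is bounded independently of `w`, and by choosing `T` so large
that the tail `{T ≤ |X|}` carries both mass and `|X|`-mass below `w μ(A₀)`: the average over the
remainder is then within `O(w)` of the average over `A₀`. Lower semicontinuity: if `Xₙ → X` in
`L¹` then, for each fixed `π`, `E[Xₙ|π] → E[X|π]` pointwise and uniformly boundedly, so the Fatou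
property gives `ρ (E[X|π]) ≤ liminf ρ (E[Xₙ|π]) ≤ liminf ρ̄ Xₙ`.
-/

open MeasureTheory Filter Topology

variable {Ω : Type*} [MeasurableSpace Ω]

/-- A finite measurable partition of `Ω` whose members have positive measure. -/
structure FinPartition (μ : Measure Ω) where
  parts : Finset (Set Ω)
  measSet : ∀ A ∈ parts, MeasurableSet A
  pairwiseDisj : ∀ A ∈ parts, ∀ B ∈ parts, A ≠ B → Disjoint A B
  cover : ⋃ A ∈ parts, A = Set.univ
  pos : ∀ A ∈ parts, 0 < μ A

/-- Conditional expectation of `X` with respect to the finite partition `π`: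
`E[X|π] = ∑_{A ∈ π} (∫_A X dμ / μ(A)) 1_A`. -/
noncomputable def pCondExp (μ : Measure Ω) (π : FinPartition μ) (X : Ω → ℝ) : Ω → ℝ :=
  fun ω => ∑ A ∈ π.parts, Set.indicator A (fun _ => (∫ x in A, X x ∂μ) / (μ A).toReal) ω

/-- A simple random variable. -/
def IsSimpleRV (X : Ω → ℝ) : Prop := Measurable X ∧ (Set.range X).Finite

/-- Membership in the smallest ideal of `L¹` generated by `S`. -/
def MemIdeal (μ : Measure Ω) (S : Set (Ω → ℝ)) (X : Ω → ℝ) : Prop :=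
  ∃ (n : ℕ) (Y : Fin n → Ω → ℝ) (l : Fin n → ℝ),
    (∀ i, Y i ∈ S) ∧ (∀ i, 0 ≤ l i) ∧ ∀ᵐ ω ∂μ, |X ω| ≤ ∑ i, l i * |Y i ω|

/-- Dilatation monotonicity of `ρ` on `𝓧`. -/
def DilMono (μ : Measure Ω) (𝓧 : Set (Ω → ℝ)) (ρ : (Ω → ℝ) → EReal) : Prop :=
  ∀ X ∈ 𝓧, ∀ π : FinPartition μ, ρ (pCondExp μ π X) ≤ ρ X

/-- The Fatou property of `ρ` on `𝓧`. -/
def FatouProp (μ : Measure Ω) (𝓧 : Set (Ω → ℝ)) (ρ : (Ω → ℝ) → EReal) : Prop :=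
  ∀ (Xn : ℕ → Ω → ℝ) (X : Ω → ℝ), (∀ n, Xn n ∈ 𝓧) → X ∈ 𝓧 →
    (∀ᵐ ω ∂μ, Tendsto (fun n => Xn n ω) atTop (nhds (X ω))) →
    (∃ Y, MemIdeal μ 𝓧 Y ∧ ∀ᵐ ω ∂μ, ∀ n, |Xn n ω| ≤ Y ω) →
    ρ X ≤ liminf (fun n => ρ (Xn n)) atTop

/-- Convergence of a net in the `σ(L¹, 𝓛)` topology. -/
def TendstoWeakSimple (μ : Measure Ω) {ι : Type*} (l : Filter ι)
    (Xn : ι → Ω → ℝ) (X : Ω → ℝ) : Prop :=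
  ∀ Z : Ω → ℝ, IsSimpleRV Z →
    Tendsto (fun i => ∫ ω, Xn i ω * Z ω ∂μ) l (nhds (∫ ω, X ω * Z ω ∂μ))

/-- The extension `ρ̄(X) = sup_{π ∈ Π} ρ(E[X|π])`. -/
noncomputable def rhoBar (μ : Measure Ω) (ρ : (Ω → ℝ) → EReal) (X : Ω → ℝ) : EReal :=
  ⨆ π : FinPartition μ, ρ (pCondExp μ π X)

/-- The conjugate `ρ^#(Y) = sup_{X ∈ 𝓛} { E[XY] - ρ(X) }`. -/
noncomputable def sharp (μ : Measure Ω) (ρ : (Ω → ℝ) → EReal) (Y : Ω → ℝ) : EReal :=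
  ⨆ X : {X : Ω → ℝ // IsSimpleRV X}, (((∫ ω, X.1 ω * Y ω ∂μ : ℝ) : EReal) - ρ X.1)

variable {μ : Measure Ω}

namespace FinPartition

lemma exists_mem (π : FinPartition μ) (ω : Ω) : ∃ A ∈ π.parts, ω ∈ A := by
  simpa using Set.eq_univ_iff_forall.mp π.cover ω

variable {ι : Type*}

noncomputable def ofDisjoint (I : Finset ι) (A : ι → Set Ω) (hmeas : ∀ i ∈ I, MeasurableSet (A i))
    (hdisj : (I : Set ι).PairwiseDisjoint A) (hpos : ∀ i ∈ I, 0 < μ (A i))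
    (hrest : 0 < μ (⋃ i ∈ I, A i)ᶜ) : FinPartition μ where
  parts := insert (⋃ i ∈ I, A i)ᶜ (I.image A)
  measSet := by
    simp only [Finset.forall_mem_insert, Finset.forall_mem_image]
    exact ⟨(Finset.measurableSet_biUnion I hmeas).compl, hmeas⟩
  pairwiseDisj := by
    have hrest_disj : ∀ i ∈ I, Disjoint (⋃ i ∈ I, A i)ᶜ (A i) := fun i hi =>
      disjoint_compl_left.mono_right (Set.subset_biUnion_of_mem (u := A) hi)
    simp only [Finset.mem_insert, Finset.mem_image]
    rintro _ (rfl | ⟨i, hi, rfl⟩) _ (rfl | ⟨j, hj, rfl⟩) hne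
    · exact absurd rfl hne
    · exact hrest_disj j hj
    · exact (hrest_disj i hi).symm
    · exact hdisj hi hj fun h => hne (h ▸ rfl)
  cover := by
    rw [Finset.set_biUnion_insert, Finset.set_biUnion_finset_image, Set.compl_union_self]
  pos := by
    simp only [Finset.forall_mem_insert, Finset.forall_mem_image]
    exact ⟨hrest, hpos⟩

instance [NeZero μ] : Nonempty (FinPartition μ) :=
  ⟨ofDisjoint (∅ : Finset Ω) (fun _ => ∅) (by simp) (by simp) (by simp)
    (by simpa using NeZero.pos (μ Set.univ))⟩

end FinPartition

lemma pCondExp_eq_of_mem [IsFiniteMeasure μ] (π : FinPartition μ) (X : Ω → ℝ) {A : Set Ω}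
    (hA : A ∈ π.parts) {ω : Ω} (hω : ω ∈ A) :
    pCondExp μ π X ω = ⨍ x in A, X x ∂μ := by
  rw [setAverage_eq, smul_eq_mul, measureReal_def, inv_mul_eq_div, pCondExp,
    Finset.sum_eq_single_of_mem A hA, Set.indicator_of_mem hω]
  intro B hB hBA
  exact Set.indicator_of_notMem (Set.disjoint_left.mp (π.pairwiseDisj A hA B hB hBA.symm) hω) _

lemma isSimpleRV_pCondExp [IsFiniteMeasure μ] (π : FinPartition μ) (X : Ω → ℝ) :
    IsSimpleRV (pCondExp μ π X) := by
  refine ⟨Finset.measurable_sum _ fun A hA => measurable_const.indicator (π.measSet A hA), ?_⟩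
  refine (π.parts.finite_toSet.image fun A => ⨍ x in A, X x ∂μ).subset ?_
  rintro _ ⟨ω, rfl⟩
  obtain ⟨A, hA, hω⟩ := π.exists_mem ω
  exact ⟨A, hA, (pCondExp_eq_of_mem π X hA hω).symm⟩

lemma pCondExp_congr_ae (π : FinPartition μ) {X Y : Ω → ℝ} (h : X =ᵐ[μ] Y) :
    pCondExp μ π X = pCondExp μ π Y := by
  funext ω
  refine Finset.sum_congr rfl fun A _ => ?_
  rw [integral_congr_ae (ae_restrict_of_ae h)]

lemma exists_setIntegral_abs_ge_le {X : Ω → ℝ} (hX : Measurable X) (hXi : Integrable X μ)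
    {ε : ℝ} (hε : 0 < ε) (t : ℝ) :
    ∃ T, t ≤ T ∧ 1 ≤ T ∧ ∫ x in {x | T ≤ |X x|}, |X x| ∂μ ≤ ε := by
  have hempty : ⋂ n : ℕ, {x | (n : ℝ) ≤ |X x|} = ∅ :=
    Set.eq_empty_of_forall_notMem fun x hx => by
      obtain ⟨n, hn⟩ := exists_nat_gt |X x|
      exact (Set.mem_iInter.mp hx n).not_gt hn
  have hlim : Tendsto (fun n : ℕ => ∫ x in {x | (n : ℝ) ≤ |X x|}, |X x| ∂μ) atTop (𝓝 0) := by
    simpa [hempty] using tendsto_setIntegral_of_antitone (μ := μ) (f := fun x => |X x|)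
      (fun n : ℕ => measurableSet_le measurable_const hX.abs)
      (fun m n hmn x (hx : (n : ℝ) ≤ |X x|) => (Nat.cast_le.mpr hmn).trans hx)
      ⟨0, hXi.abs.integrableOn⟩
  obtain ⟨n, hn, hnt⟩ :=
    ((hlim.eventually (ge_mem_nhds hε)).and (eventually_ge_atTop ⌈max t 1⌉₊)).exists
  have hn' : max t 1 ≤ n := Nat.ceil_le.mp hnt
  exact ⟨n, (le_max_left t 1).trans hn', (le_max_right t 1).trans hn', hn⟩

section Average

variable [IsFiniteMeasure μ] {X : Ω → ℝ} {A R : Set Ω}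

lemma setAverage_mem_Icc (hA : MeasurableSet A) (hpos : 0 < μ A) (hX : IntegrableOn X A μ)
    {a b : ℝ} (h : ∀ ω ∈ A, X ω ∈ Set.Icc a b) : ⨍ x in A, X x ∂μ ∈ Set.Icc a b :=
  (convex_Icc a b).set_average_mem isClosed_Icc hpos.ne' (measure_ne_top μ A)
    (ae_restrict_of_forall_mem hA h) hX

lemma abs_setAverage_sub_le_of_subset (hA : MeasurableSet A) (hR : MeasurableSet R)
    (hAR : A ⊆ R) (hpos : 0 < μ A) (hX : IntegrableOn X R μ) {ε : ℝ}
    (hint : ∫ x in R \ A, |X x| ∂μ ≤ ε * μ.real A) (hmeas : μ.real (R \ A) ≤ ε * μ.real A)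
    (c : ℝ) :
    |⨍ x in R, X x ∂μ - c| ≤ |⨍ x in A, X x ∂μ - c| + ε * (1 + |c|) := by
  set a := μ.real A
  set d := μ.real (R \ A)
  have ha : 0 < a := ENNReal.toReal_pos hpos.ne' (measure_ne_top μ A)
  have hd : 0 ≤ d := measureReal_nonneg
  have hε : 0 ≤ ε := nonneg_of_mul_nonneg_left (hd.trans hmeas) ha
  have hmeasure_split : μ.real R = a + d := by
    rw [← measureReal_union Set.disjoint_sdiff_right (hR.diff hA), Set.union_sdiff_cancel hAR]
  have hintegral_split :
      ∫ x in R, X x ∂μ = a * ⨍ x in A, X x ∂μ + ∫ x in R \ A, X x ∂μ := by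
    rw [← smul_eq_mul, measure_smul_setAverage _ (measure_ne_top μ A),
      ← setIntegral_union Set.disjoint_sdiff_right (hR.diff hA) (hX.mono_set hAR)
        (hX.mono_set Set.sdiff_subset), Set.union_sdiff_cancel hAR]
  have hrest : |∫ x in R \ A, X x ∂μ - c * d| ≤ ε * (1 + |c|) * a := by
    calc |∫ x in R \ A, X x ∂μ - c * d|
        ≤ ∫ x in R \ A, |X x| ∂μ + |c| * d := by
          refine (abs_sub _ _).trans (add_le_add abs_integral_le_integral_abs ?_)
          rw [abs_mul, abs_of_nonneg hd]
      _ ≤ ε * a + |c| * (ε * a) := by gcongr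
      _ = ε * (1 + |c|) * a := by ring
  have hsplit : ⨍ x in R, X x ∂μ - c
      = (a * (⨍ x in A, X x ∂μ - c) + (∫ x in R \ A, X x ∂μ - c * d)) / (a + d) := by
    rw [setAverage_eq, smul_eq_mul, hintegral_split, hmeasure_split]
    field_simp
    ring
  have had : 0 < a + d := by linarith
  have habs := abs_nonneg (⨍ x in A, X x ∂μ - c)
  rw [hsplit, abs_div, abs_of_pos had, div_le_iff₀ had]
  calc |a * (⨍ x in A, X x ∂μ - c) + (∫ x in R \ A, X x ∂μ - c * d)|
      ≤ a * |⨍ x in A, X x ∂μ - c| + ε * (1 + |c|) * a := by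
        refine (abs_add_le _ _).trans (add_le_add ?_ hrest)
        rw [abs_mul, abs_of_pos ha]
    _ ≤ (|⨍ x in A, X x ∂μ - c| + ε * (1 + |c|)) * (a + d) := by
        nlinarith [mul_nonneg (add_nonneg habs (mul_nonneg hε (add_nonneg zero_le_one
          (abs_nonneg c)))) hd]

lemma measureReal_le_setIntegral_abs (hX : Measurable X) (hXi : Integrable X μ) {T : ℝ}
    (hT : 1 ≤ T) : μ.real {ω | T ≤ |X ω|} ≤ ∫ x in {ω | T ≤ |X ω|}, |X x| ∂μ := by
  simpa using setIntegral_ge_of_const_le_real (c := 1)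
    (measurableSet_le measurable_const hX.abs) (measure_ne_top μ _)
    (fun x hx => hT.trans hx) hXi.abs.integrableOn

lemma abs_setAverage_sub_le_of_ae_subset_tail (hA : MeasurableSet A) (hR : MeasurableSet R)
    (hAR : A ⊆ R) (hpos : 0 < μ A) (hX : Measurable X) (hXi : Integrable X μ) {T ε : ℝ} (hT : 1 ≤ T)
    (htail : ∫ x in {ω | T ≤ |X ω|}, |X x| ∂μ ≤ ε * μ.real A)
    (hRA : (R \ A : Set Ω) ≤ᵐ[μ] {ω | T ≤ |X ω|}) (c : ℝ) :
    |⨍ x in R, X x ∂μ - c| ≤ |⨍ x in A, X x ∂μ - c| + ε * (1 + |c|) := by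
  refine abs_setAverage_sub_le_of_subset hA hR hAR hpos hXi.integrableOn ?_ ?_ c
  · exact (setIntegral_mono_set hXi.abs.integrableOn (ae_of_all _ fun _ => abs_nonneg _)
      hRA).trans htail
  · exact (ENNReal.toReal_mono (measure_ne_top μ _) (measure_mono_ae hRA)).trans
      ((measureReal_le_setIntegral_abs hX hXi hT).trans htail)

end Average

omit [MeasurableSpace Ω] in
lemma floor_div_mem_Ico {x w T : ℝ} (hw : 0 < w) (hx : |x| < T) :
    ⌊x / w⌋ ∈ Finset.Ico (-⌈T / w⌉) ⌈T / w⌉ := by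
  have hTK : T / w ≤ ⌈T / w⌉ := Int.le_ceil _
  have hxT : |x / w| < T / w := by
    rw [abs_div, abs_of_pos hw]
    exact div_lt_div_of_pos_right hx hw
  obtain ⟨hlo, hhi⟩ := abs_lt.mp hxT
  refine Finset.mem_Ico.mpr ⟨Int.le_floor.mpr ?_, Int.floor_lt.mpr ?_⟩ <;> push_cast <;> linarith

section Grid

def gridCell (X : Ω → ℝ) (w : ℝ) (k : ℤ) : Set Ω := X ⁻¹' Set.Ico (k * w) ((k + 1) * w)

variable {X : Ω → ℝ} {w : ℝ}

lemma measurableSet_gridCell (hX : Measurable X) (k : ℤ) : MeasurableSet (gridCell X w k) :=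
  hX measurableSet_Ico

omit [MeasurableSpace Ω] in
lemma mem_gridCell_iff_floor_eq (hw : 0 < w) {ω : Ω} {k : ℤ} :
    ω ∈ gridCell X w k ↔ ⌊X ω / w⌋ = k := by
  rw [Int.floor_eq_iff, le_div_iff₀ hw, div_lt_iff₀ hw]
  rfl

omit [MeasurableSpace Ω] in
lemma pairwiseDisjoint_gridCell (hw : 0 < w) (s : Set ℤ) : s.PairwiseDisjoint (gridCell X w) :=
  fun _ _ _ _ hkl => Set.disjoint_left.mpr fun _ hk hl =>
    hkl (((mem_gridCell_iff_floor_eq hw).mp hk).symm.trans ((mem_gridCell_iff_floor_eq hw).mp hl))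

omit [MeasurableSpace Ω] in
lemma abs_sub_lt_of_mem_gridCell {k : ℤ} {ω ω' : Ω} (hω : ω ∈ gridCell X w k)
    (hω' : ω' ∈ gridCell X w k) : |X ω - X ω'| < w := by
  simp only [gridCell, Set.mem_preimage, Set.mem_Ico] at hω hω'
  rw [abs_sub_lt_iff]
  constructor <;> linarith

lemma exists_gridCell_pos_abs_le (hw : 0 < w) {M : ℝ} (hM : 0 < μ {ω | |X ω| ≤ M}) :
    ∃ k, 0 < μ (gridCell X w k) ∧ ∀ ω ∈ gridCell X w k, |X ω| ≤ M + w := by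
  have hcover : {ω | |X ω| ≤ M} = ⋃ k, gridCell X w k ∩ {ω | |X ω| ≤ M} := by
    ext ω
    simp [mem_gridCell_iff_floor_eq hw]
  obtain ⟨k, hk⟩ : ∃ k, 0 < μ (gridCell X w k ∩ {ω | |X ω| ≤ M}) := by
    by_contra! h
    exact hM.ne' (hcover ▸ measure_iUnion_null fun k => nonpos_iff_eq_zero.mp (h k))
  obtain ⟨ω', hω'k, hω'M⟩ := nonempty_of_measure_ne_zero hk.ne'
  refine ⟨k, hk.trans_le (measure_mono Set.inter_subset_left), fun ω hω => ?_⟩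
  have hclose := abs_sub_lt_of_mem_gridCell hω hω'k
  have hM' : |X ω'| ≤ M := hω'M
  linarith [abs_sub_abs_le_abs_sub (X ω) (X ω')]

lemma abs_setAverage_gridCell_sub_le [IsFiniteMeasure μ] (hX : Measurable X)
    (hXi : Integrable X μ) {k : ℤ} (hpos : 0 < μ (gridCell X w k)) {ω : Ω}
    (hω : ω ∈ gridCell X w k) : |⨍ x in gridCell X w k, X x ∂μ - X ω| ≤ w := by
  obtain ⟨hlo, hhi⟩ := setAverage_mem_Icc (measurableSet_gridCell hX k) hpos hXi.integrableOn
    fun x hx => Set.Ico_subset_Icc_self hx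
  obtain ⟨hωlo, hωhi⟩ : k * w ≤ X ω ∧ X ω < (k + 1) * w := hω
  rw [abs_sub_le_iff]
  constructor <;> linarith

end Grid

lemma exists_finPartition_gridCell {X : Ω → ℝ} (hX : Measurable X) {w : ℝ} (hw : 0 < w)
    {k₀ : ℤ} (hk₀ : 0 < μ (gridCell X w k₀)) (T : ℝ) :
    ∃ (π : FinPartition μ) (R N : Set Ω), R ∈ π.parts ∧ gridCell X w k₀ ⊆ R ∧ μ N = 0 ∧
      (∀ B ∈ π.parts, B = R ∨ ∃ k, B = gridCell X w k) ∧
      ∀ ω ∈ R, ω ∉ N → |X ω| < T → ω ∈ gridCell X w k₀ := by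
  classical
  set A := gridCell X w
  set K : ℤ := ⌈T / w⌉
  set I := ((Finset.Ico (-K) K).erase k₀).filter fun k => 0 < μ (A k)
  set R := (⋃ k ∈ I, A k)ᶜ
  have hA₀R : A k₀ ⊆ R := fun ω hω hωI => by
    obtain ⟨k, hk, hωk⟩ := Set.mem_iUnion₂.mp hωI
    have hkk₀ : k ≠ k₀ := (Finset.mem_erase.mp (Finset.mem_filter.mp hk).1).1
    exact Set.disjoint_left.mp
      (pairwiseDisjoint_gridCell hw Set.univ trivial trivial hkk₀.symm) hω hωk
  refine ⟨FinPartition.ofDisjoint I A (fun k _ => measurableSet_gridCell hX k)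
      (pairwiseDisjoint_gridCell hw _) (fun k hk => (Finset.mem_filter.mp hk).2)
      (hk₀.trans_le (measure_mono hA₀R)),
    R, ⋃ k ∈ (Finset.Ico (-K) K).filter (fun k => μ (A k) = 0), A k,
    Finset.mem_insert_self _ _, hA₀R,
    (measure_biUnion_null_iff (Finset.countable_toSet _)).mpr
      fun k hk => (Finset.mem_filter.mp hk).2, ?_, ?_⟩
  · intro B hB
    rcases Finset.mem_insert.mp hB with rfl | hB
    · exact .inl rfl
    · obtain ⟨k, -, rfl⟩ := Finset.mem_image.mp hB
      exact .inr ⟨k, rfl⟩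
  · intro ω hωR hωN hωT
    set k := ⌊X ω / w⌋
    have hωk : ω ∈ A k := (mem_gridCell_iff_floor_eq hw).mpr rfl
    have hkK : k ∈ Finset.Ico (-K) K := floor_div_mem_Ico hw hωT
    by_contra hωk₀
    have hkk₀ : k ≠ k₀ := fun h => hωk₀ (h ▸ hωk)
    rcases eq_zero_or_pos (μ (A k)) with hk0 | hkpos
    · exact hωN (Set.mem_biUnion (Finset.mem_filter.mpr ⟨hkK, hk0⟩) hωk)
    · exact hωR (Set.mem_biUnion
        (Finset.mem_filter.mpr ⟨Finset.mem_erase.mpr ⟨hkk₀, hkK⟩, hkpos⟩) hωk)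

lemma exists_pCondExp_close [IsFiniteMeasure μ] {X : Ω → ℝ} (hX : Measurable X)
    (hXi : Integrable X μ) {M : ℝ} (hM : 0 < μ {ω | |X ω| ≤ M}) {w : ℝ} (hw : 0 < w)
    (hw1 : w ≤ 1) (t : ℝ) :
    ∃ (π : FinPartition μ) (N : Set Ω), μ N = 0 ∧
      (∀ ω, |pCondExp μ π X ω| ≤ |X ω| + (M + 2)) ∧
      ∀ ω ∉ N, |X ω| < t → |pCondExp μ π X ω - X ω| ≤ (M + 3) * w := by
  have hM0 : 0 ≤ M := by
    obtain ⟨ω, hω⟩ := nonempty_of_measure_ne_zero hM.ne'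
    exact (abs_nonneg _).trans hω
  obtain ⟨k₀, hA₀pos, hA₀bdd⟩ := exists_gridCell_pos_abs_le hw hM
  set A₀ := gridCell X w k₀
  obtain ⟨T, htT, hT1, htail⟩ := exists_setIntegral_abs_ge_le hX hXi (t := t)
    (ε := w * μ.real A₀) (mul_pos hw (ENNReal.toReal_pos hA₀pos.ne' (measure_ne_top μ _)))
  obtain ⟨π, R, N, hR, hA₀R, hN, hparts, hR_anchor⟩ :=
    exists_finPartition_gridCell (μ := μ) hX hw hA₀pos T
  have hR_tail : (R \ A₀ : Set Ω) ≤ᵐ[μ] {ω | T ≤ |X ω|} := by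
    filter_upwards [measure_eq_zero_iff_ae_notMem.mp hN] with ω hωN hω
    by_contra hωT
    exact hω.2 (hR_anchor ω hω.1 hωN (not_le.mp hωT))
  have hrest : ∀ ω ∈ R, ∀ c,
      |pCondExp μ π X ω - c| ≤ |⨍ x in A₀, X x ∂μ - c| + w * (1 + |c|) := fun ω hω c => by
    rw [pCondExp_eq_of_mem π X hR hω]
    exact abs_setAverage_sub_le_of_ae_subset_tail (measurableSet_gridCell hX k₀)
      (π.measSet R hR) hA₀R hA₀pos hX hXi hT1 htail hR_tail c
  have hA₀avg : |⨍ x in A₀, X x ∂μ| ≤ M + 1 :=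
    abs_le.mpr <| setAverage_mem_Icc (measurableSet_gridCell hX k₀) hA₀pos hXi.integrableOn
      fun ω hω => abs_le.mp ((hA₀bdd ω hω).trans (by linarith))
  have hcell : ∀ ω, ω ∉ R → |pCondExp μ π X ω - X ω| ≤ w := by
    intro ω hωR
    obtain ⟨B, hB, hωB⟩ := π.exists_mem ω
    obtain ⟨k, rfl⟩ := (hparts B hB).resolve_left fun h => hωR (h ▸ hωB)
    rw [pCondExp_eq_of_mem π X hB hωB]
    exact abs_setAverage_gridCell_sub_le hX hXi (π.pos _ hB) hωB
  refine ⟨π, N, hN, fun ω => ?_, fun ω hωN hωt => ?_⟩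
  · by_cases hωR : ω ∈ R
    · have h := hrest ω hωR 0
      simp only [sub_zero, abs_zero, add_zero, mul_one] at h
      linarith [abs_nonneg (X ω)]
    · linarith [hcell ω hωR, abs_sub_abs_le_abs_sub (pCondExp μ π X ω) (X ω)]
  · by_cases hωR : ω ∈ R
    · have hωA₀ := hR_anchor ω hωR hωN (hωt.trans_le htT)
      have h1 := hrest ω hωR (X ω)
      have h2 := abs_setAverage_gridCell_sub_le hX hXi hA₀pos hωA₀
      have h3 : w * (1 + |X ω|) ≤ w * (M + 2) :=
        mul_le_mul_of_nonneg_left (by linarith [hA₀bdd ω hωA₀]) hw.le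
      linarith
    · nlinarith [hcell ω hωR]

lemma exists_pos_measure_abs_le [NeZero μ] (X : Ω → ℝ) : ∃ M, 0 < μ {ω | |X ω| ≤ M} := by
  by_contra! h
  have hcover : ⋃ n : ℕ, {ω | |X ω| ≤ n} = Set.univ :=
    Set.eq_univ_of_forall fun ω => Set.mem_iUnion.mpr (exists_nat_ge |X ω|)
  exact NeZero.ne μ (Measure.measure_univ_eq_zero.mp
    (hcover ▸ measure_iUnion_null fun n => nonpos_iff_eq_zero.mp (h n)))

lemma exists_pCondExp_tendsto_ae [IsFiniteMeasure μ] [NeZero μ] {X : Ω → ℝ}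
    (hXi : Integrable X μ) :
    ∃ (b : ℝ) (π : ℕ → FinPartition μ),
      (∀ᵐ ω ∂μ, ∀ n, |pCondExp μ (π n) X ω| ≤ |X ω| + b) ∧
      ∀ᵐ ω ∂μ, Tendsto (fun n => pCondExp μ (π n) X ω) atTop (𝓝 (X ω)) := by
  set Y := hXi.1.mk X
  have hXY : X =ᵐ[μ] Y := hXi.1.ae_eq_mk
  have hYi : Integrable Y μ := hXi.congr hXY
  obtain ⟨M, hM⟩ := exists_pos_measure_abs_le (μ := μ) Y
  choose π N hN hdom hclose using fun n : ℕ =>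
    exists_pCondExp_close hXi.1.measurable_mk hYi hM (w := 1 / (n + 1)) (by positivity)
      (div_le_one_of_le₀ (by simp) (by positivity)) n
  simp only [pCondExp_congr_ae _ hXY]
  refine ⟨M + 2, π, ?_, ?_⟩
  · filter_upwards [hXY] with ω hω n
    exact hω ▸ hdom n ω
  · filter_upwards [hXY, measure_eq_zero_iff_ae_notMem.mp (measure_iUnion_null hN)]
      with ω hω hωN
    rw [hω, tendsto_iff_norm_sub_tendsto_zero]
    have hlim := (tendsto_one_div_add_atTop_nhds_zero_nat (𝕜 := ℝ)).const_mul (M + 3)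
    rw [mul_zero] at hlim
    refine squeeze_zero' (Eventually.of_forall fun _ => norm_nonneg _) ?_ hlim
    obtain ⟨n₀, hn₀⟩ := exists_nat_gt |Y ω|
    filter_upwards [eventually_ge_atTop n₀] with n hn
    exact hclose n ω (fun h => hωN (Set.mem_iUnion.mpr ⟨n, h⟩))
      (hn₀.trans_le (by exact_mod_cast hn))

lemma tendsto_setAverage_of_tendsto_integral_abs_sub {ι : Type*} {l : Filter ι}
    {Xs : ι → Ω → ℝ} {X : Ω → ℝ} (hXs : ∀ i, Integrable (Xs i) μ) (hX : Integrable X μ)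
    (h : Tendsto (fun i => ∫ ω, |Xs i ω - X ω| ∂μ) l (𝓝 0)) (A : Set Ω) :
    Tendsto (fun i => ⨍ x in A, Xs i x ∂μ) l (𝓝 (⨍ x in A, X x ∂μ)) := by
  have hL1 : Tendsto (fun i => ∫⁻ ω, ‖Xs i ω - X ω‖ₑ ∂μ) l (𝓝 0) := by
    have hofReal := ENNReal.tendsto_ofReal h
    rw [ENNReal.ofReal_zero] at hofReal
    refine hofReal.congr fun i => ?_
    simp only [← Real.norm_eq_abs]
    exact ofReal_integral_norm_eq_lintegral_enorm ((hXs i).sub hX)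
  simp only [setAverage_eq]
  exact (tendsto_setIntegral_of_L1 X hX.1 (Eventually.of_forall hXs) hL1 A).const_smul _

lemma isSimpleRV_const (c : ℝ) : IsSimpleRV fun _ : Ω => c :=
  ⟨measurable_const, Set.finite_range_const⟩

lemma memIdeal_of_abs_le {S : Set (Ω → ℝ)} {X Y : Ω → ℝ} (hY : Y ∈ S)
    (h : ∀ᵐ ω ∂μ, |X ω| ≤ |Y ω|) : MemIdeal μ S X :=
  ⟨1, ![Y], ![1], by simp [hY], by simp, by simpa using h⟩

lemma memIdeal_of_abs_le_add {S : Set (Ω → ℝ)} {X Y Z : Ω → ℝ} (hY : Y ∈ S) (hZ : Z ∈ S)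
    (h : ∀ᵐ ω ∂μ, |X ω| ≤ |Y ω| + |Z ω|) : MemIdeal μ S X :=
  ⟨2, ![Y, Z], ![1, 1], by simp [Fin.forall_fin_two, hY, hZ], by simp [Fin.forall_fin_two],
    by simpa [Fin.sum_univ_two] using h⟩

section Extension

variable {𝓧 : Set (Ω → ℝ)} {ρ : (Ω → ℝ) → EReal}

lemma le_rhoBar (π : FinPartition μ) (X : Ω → ℝ) : ρ (pCondExp μ π X) ≤ rhoBar μ ρ X :=
  le_iSup (fun π => ρ (pCondExp μ π X)) π

lemma rhoBar_le_of_dilMono (hdil : DilMono μ 𝓧 ρ) {X : Ω → ℝ} (hX : X ∈ 𝓧) :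
    rhoBar μ ρ X ≤ ρ X :=
  iSup_le (hdil X hX)

lemma le_rhoBar_of_fatou [IsFiniteMeasure μ] [NeZero μ]
    (hsimple : ∀ Z : Ω → ℝ, IsSimpleRV Z → Z ∈ 𝓧) (hFatou : FatouProp μ 𝓧 ρ)
    {X : Ω → ℝ} (hX : X ∈ 𝓧) (hXi : Integrable X μ) : ρ X ≤ rhoBar μ ρ X := by
  obtain ⟨b, π, hdom, hlim⟩ := exists_pCondExp_tendsto_ae hXi
  have hideal : MemIdeal μ 𝓧 fun ω => |X ω| + b :=
    memIdeal_of_abs_le_add hX (hsimple _ (isSimpleRV_const b))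
      (ae_of_all _ fun ω => by simpa only [abs_abs] using abs_add_le |X ω| b)
  calc ρ X ≤ liminf (fun n => ρ (pCondExp μ (π n) X)) atTop :=
        hFatou _ X (fun n => hsimple _ (isSimpleRV_pCondExp _ _)) hX hlim ⟨_, hideal, hdom⟩
    _ ≤ rhoBar μ ρ X :=
        liminf_le_of_frequently_le' (Frequently.of_forall fun n => le_rhoBar (π n) X)

lemma rhoBar_ne_bot [IsFiniteMeasure μ] [NeZero μ] (hsimple : ∀ Z : Ω → ℝ, IsSimpleRV Z → Z ∈ 𝓧)
    (hbot : ∀ X ∈ 𝓧, ρ X ≠ ⊥) (X : Ω → ℝ) : rhoBar μ ρ X ≠ ⊥ := by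
  obtain ⟨π⟩ : Nonempty (FinPartition μ) := inferInstance
  exact ne_bot_of_le_ne_bot (hbot _ (hsimple _ (isSimpleRV_pCondExp π X))) (le_rhoBar π X)

lemma rhoBar_pCondExp_le [IsFiniteMeasure μ] (hsimple : ∀ Z : Ω → ℝ, IsSimpleRV Z → Z ∈ 𝓧)
    (hdil : DilMono μ 𝓧 ρ) (X : Ω → ℝ) (π : FinPartition μ) :
    rhoBar μ ρ (pCondExp μ π X) ≤ rhoBar μ ρ X :=
  (rhoBar_le_of_dilMono hdil (hsimple _ (isSimpleRV_pCondExp π X))).trans (le_rhoBar π X)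

lemma rhoBar_le_liminf [IsFiniteMeasure μ] (hsimple : ∀ Z : Ω → ℝ, IsSimpleRV Z → Z ∈ 𝓧)
    (hFatou : FatouProp μ 𝓧 ρ) {Xs : ℕ → Ω → ℝ} {X : Ω → ℝ} (hXs : ∀ n, Integrable (Xs n) μ)
    (hX : Integrable X μ) (h : Tendsto (fun n => ∫ ω, |Xs n ω - X ω| ∂μ) atTop (𝓝 0)) :
    rhoBar μ ρ X ≤ liminf (fun n => rhoBar μ ρ (Xs n)) atTop := by
  refine iSup_le fun π => ?_
  have havg := tendsto_setAverage_of_tendsto_integral_abs_sub hXs hX h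
  obtain ⟨C, hC⟩ : BddAbove (Set.range fun n => ∑ A ∈ π.parts, |⨍ x in A, Xs n x ∂μ|) :=
    (tendsto_finsetSum _ fun A _ => (havg A).abs).bddAbove_range
  have hbound : ∀ n ω, |pCondExp μ π (Xs n) ω| ≤ C := by
    intro n ω
    obtain ⟨A, hA, hω⟩ := π.exists_mem ω
    rw [pCondExp_eq_of_mem π _ hA hω]
    exact (Finset.single_le_sum (fun B _ => abs_nonneg (⨍ x in B, Xs n x ∂μ)) hA).trans
      (hC ⟨n, rfl⟩)
  have hconv : ∀ ω, Tendsto (fun n => pCondExp μ π (Xs n) ω) atTop (𝓝 (pCondExp μ π X ω)) := by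
    intro ω
    obtain ⟨A, hA, hω⟩ := π.exists_mem ω
    simpa only [pCondExp_eq_of_mem π _ hA hω] using havg A
  calc ρ (pCondExp μ π X) ≤ liminf (fun n => ρ (pCondExp μ π (Xs n))) atTop :=
        hFatou _ _ (fun n => hsimple _ (isSimpleRV_pCondExp π _))
          (hsimple _ (isSimpleRV_pCondExp π X)) (ae_of_all _ hconv)
          ⟨fun _ => C, memIdeal_of_abs_le (hsimple _ (isSimpleRV_const C)) (ae_of_all _ fun _ =>
            le_rfl), ae_of_all _ fun ω n => hbound n ω⟩
    _ ≤ liminf (fun n => rhoBar μ ρ (Xs n)) atTop :=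
        liminf_le_liminf (Eventually.of_forall fun n => le_rhoBar π (Xs n))

end Extension

theorem stmt6_general (μ : Measure Ω) [IsProbabilityMeasure μ]
    (𝓧 : Set (Ω → ℝ)) (h𝓧L1 : ∀ X ∈ 𝓧, Integrable X μ)
    (h𝓛 : ∀ Z : Ω → ℝ, IsSimpleRV Z → Z ∈ 𝓧)
    (ρ : (Ω → ℝ) → EReal) (hbot : ∀ X ∈ 𝓧, ρ X ≠ ⊥)
    (hdil : DilMono μ 𝓧 ρ) (hFatou : FatouProp μ 𝓧 ρ) :
    (∀ X ∈ 𝓧, rhoBar μ ρ X = ρ X) ∧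
    (∀ X : Ω → ℝ, Integrable X μ → rhoBar μ ρ X ≠ ⊥) ∧
    (∀ X : Ω → ℝ, Integrable X μ → ∀ π : FinPartition μ,
      rhoBar μ ρ (pCondExp μ π X) ≤ rhoBar μ ρ X) ∧
    (∀ (Xn : ℕ → Ω → ℝ) (X : Ω → ℝ), (∀ n, Integrable (Xn n) μ) → Integrable X μ →
      Tendsto (fun n => ∫ ω, |Xn n ω - X ω| ∂μ) atTop (nhds 0) →
      rhoBar μ ρ X ≤ liminf (fun n => rhoBar μ ρ (Xn n)) atTop) :=
  ⟨fun X hX => (rhoBar_le_of_dilMono hdil hX).antisymm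
      (le_rhoBar_of_fatou h𝓛 hFatou hX (h𝓧L1 X hX)),
    fun X _ => rhoBar_ne_bot h𝓛 hbot X,
    fun X _ => rhoBar_pCondExp_le h𝓛 hdil X,
    fun _ _ hXn hX h => rhoBar_le_liminf h𝓛 hFatou hXn hX h⟩

/-- For `ρ : 𝓧 → (-∞,∞]` dilatation monotone with the Fatou property,
`ρ̄(X) = sup_π ρ(E[X|π])` agrees with `ρ` on `𝓧`, never takes the value `-∞` on `L¹`,
is dilatation monotone on `L¹`, and is `‖·‖₁` lower semicontinuous on `L¹`. -/
theorem stmt6 (μ : Measure Ω) [IsProbabilityMeasure μ] [NullSingletonClass μ]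
    (𝓧 : Set (Ω → ℝ)) (h𝓧L1 : ∀ X ∈ 𝓧, Integrable X μ)
    (h𝓛 : ∀ Z : Ω → ℝ, IsSimpleRV Z → Z ∈ 𝓧)
    (ρ : (Ω → ℝ) → EReal) (hbot : ∀ X ∈ 𝓧, ρ X ≠ ⊥)
    (hdil : DilMono μ 𝓧 ρ) (hFatou : FatouProp μ 𝓧 ρ) :
    (∀ X ∈ 𝓧, rhoBar μ ρ X = ρ X) ∧
    (∀ X : Ω → ℝ, Integrable X μ → rhoBar μ ρ X ≠ ⊥) ∧
    (∀ X : Ω → ℝ, Integrable X μ → ∀ π : FinPartition μ,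
      rhoBar μ ρ (pCondExp μ π X) ≤ rhoBar μ ρ X) ∧
    (∀ (Xn : ℕ → Ω → ℝ) (X : Ω → ℝ), (∀ n, Integrable (Xn n) μ) → Integrable X μ →
      Tendsto (fun n => ∫ ω, |Xn n ω - X ω| ∂μ) atTop (nhds 0) →
      rhoBar μ ρ X ≤ liminf (fun n => rhoBar μ ρ (Xn n)) atTop) :=
  stmt6_general μ 𝓧 h𝓧L1 h𝓛 ρ hbot hdil hFatou
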